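/- arXiv:2107.07086 — 3 statements merged into one kernel-verified Lean document; each statement's English description precedes it below -/
import Mathlib

section
/- Let n ≥ 1, let X_1,…,X_n ∈ ℝ^p, and let w = (w_1,…,w_n) ∈ ℝ^n be a weight vector with w_i ≥ 0 for all i and ∑_{i=1}^n w_i = n. Then the weighted energy distance between the weighted and unweighted empirical distributions of the X_i satisfies E(F^n_{X,w}, F^n_X) = ∫_{ℝ^p} |φ^n_X(t) − φ^n_{X,w}(t)|² / (C_p ‖t‖_2^{1+p}) dt, where C_p = π^{(1+p)/2}/Γ((1+p)/2). -/
open MeasureTheory Finset Filter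
open scoped BigOperators RealInnerProductSpace ENNReal

noncomputable section

abbrev Evec (p : ℕ) := EuclideanSpace ℝ (Fin p)

/-- Doubly-centered distance matrix of the covariates. -/
def Cmat {p : ℕ} (n : ℕ) (X : Fin n → Evec p) (k l : Fin n) : ℝ :=
  ‖X k - X l‖ - (1 / (n : ℝ)) * ∑ j, ‖X k - X j‖ - (1 / (n : ℝ)) * ∑ j, ‖X j - X l‖
    + (1 / (n : ℝ) ^ 2) * ∑ j, ∑ m, ‖X j - X m‖

/-- Doubly-centered distance matrix of the treatment. -/
def Dmat (n : ℕ) (A : Fin n → ℝ) (k l : Fin n) : ℝ :=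
  |A k - A l| - (1 / (n : ℝ)) * ∑ j, |A k - A j| - (1 / (n : ℝ)) * ∑ j, |A j - A l|
    + (1 / (n : ℝ) ^ 2) * ∑ j, ∑ m, |A j - A m|

/-- Weighted distance covariance V²_{n,w}(X, A). -/
def Vnw {p : ℕ} (n : ℕ) (X : Fin n → Evec p) (A : Fin n → ℝ) (w : Fin n → ℝ) : ℝ :=
  (1 / (n : ℝ) ^ 2) * ∑ k, ∑ l, w k * w l * Cmat n X k l * Dmat n A k l

/-- Weighted energy distance E(F^n_{X,w}, F^n_X). -/
def energyX {p : ℕ} (n : ℕ) (X : Fin n → Evec p) (w : Fin n → ℝ) : ℝ :=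
  (2 / (n : ℝ) ^ 2) * ∑ i, ∑ j, w i * ‖X i - X j‖
    - (1 / (n : ℝ) ^ 2) * ∑ i, ∑ j, w i * w j * ‖X i - X j‖
    - (1 / (n : ℝ) ^ 2) * ∑ i, ∑ j, ‖X i - X j‖

/-- Weighted energy distance E(F^n_{A,w}, F^n_A). -/
def energyA (n : ℕ) (A : Fin n → ℝ) (w : Fin n → ℝ) : ℝ :=
  (2 / (n : ℝ) ^ 2) * ∑ i, ∑ j, w i * |A i - A j|
    - (1 / (n : ℝ) ^ 2) * ∑ i, ∑ j, w i * w j * |A i - A j|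
    - (1 / (n : ℝ) ^ 2) * ∑ i, ∑ j, |A i - A j|

/-- The dependence criterion D(w). -/
def Dcrit {p : ℕ} (n : ℕ) (X : Fin n → Evec p) (A : Fin n → ℝ) (w : Fin n → ℝ) : ℝ :=
  Vnw n X A w + energyX n X w + energyA n A w

/-- Weighted empirical joint characteristic function φ^n_{X,A,w}(t,s). -/
def phiXAw {p : ℕ} (n : ℕ) (X : Fin n → Evec p) (A : Fin n → ℝ) (w : Fin n → ℝ)
    (t : Evec p) (s : ℝ) : ℂ :=
  (1 / (n : ℂ)) * ∑ i, (w i : ℂ) * Complex.exp (Complex.I * ((inner ℝ t (X i) : ℝ) + s * A i))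

/-- Weighted empirical characteristic function φ^n_{X,w}(t). -/
def phiXw {p : ℕ} (n : ℕ) (X : Fin n → Evec p) (w : Fin n → ℝ) (t : Evec p) : ℂ :=
  (1 / (n : ℂ)) * ∑ i, (w i : ℂ) * Complex.exp (Complex.I * ((inner ℝ t (X i) : ℝ)))

/-- Weighted empirical characteristic function φ^n_{A,w}(s). -/
def phiAw (n : ℕ) (A : Fin n → ℝ) (w : Fin n → ℝ) (s : ℝ) : ℂ :=
  (1 / (n : ℂ)) * ∑ i, (w i : ℂ) * Complex.exp (Complex.I * (s * A i))

/-- The constant c_d = π^{(1+d)/2} / Γ((1+d)/2). -/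
def cConst (d : ℕ) : ℝ := Real.pi ^ ((1 + (d : ℝ)) / 2) / Real.Gamma ((1 + (d : ℝ)) / 2)

/-- The weight function ω(t,s) = (c_p c_1 ‖t‖^{1+p} |s|²)⁻¹. -/
def omegaW (p : ℕ) (t : Evec p) (s : ℝ) : ℝ :=
  (cConst p * cConst 1 * ‖t‖ ^ (1 + p) * |s| ^ 2)⁻¹

end

/-! Writing `u = 1 - w`, both sides are quadratic forms in `u`, and since `∑ uᵢ = 0` the squared
modulus `|∑ uⱼ e^{i⟨t, Xⱼ⟩}|²` equals `-∑ uⱼ uₖ (1 - cos ⟨Xⱼ - Xₖ, t⟩)`. The theorem then follows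
from Székely's formula `∫ (1 - cos ⟨x, t⟩) / ‖t‖^{1+d} dt = C_d ‖x‖` in dimension `d`, which comes
from the subordination `‖t‖^{-(1+d)} = Γ(q)⁻¹ ∫₀^∞ u^{q-1} e^{-u‖t‖²} du` with `q = (1 + d) / 2`,
Tonelli, the Fourier transform of the Gaussian, and the one-dimensional integral
`∫₀^∞ u^{-1/2} (1 - e^{-c/u}) du = 2 √(π c)`. -/

open Set Real

theorem lintegral_Ioo_mul_exp_neg_mul {r a : ℝ} (hr : 0 ≤ r) (ha : 0 ≤ a) :
    ∫⁻ s in Ioo 0 a, ENNReal.ofReal (r * exp (-(r * s))) = ENNReal.ofReal (1 - exp (-(r * a))) := by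
  have hcont : Continuous fun s => r * exp (-(r * s)) := by fun_prop
  rw [← ofReal_integral_eq_lintegral_ofReal (hcont.integrableOn_Icc.mono_set Ioo_subset_Icc_self)
    (.of_forall fun s => by positivity), ← integral_Ioc_eq_integral_Ioo,
    ← intervalIntegral.integral_of_le ha,
    intervalIntegral.integral_eq_sub_of_hasDerivAt
      (fun s _ => ProbabilityTheory.hasDerivAt_neg_exp_mul_exp) (hcont.intervalIntegrable _ _)]
  simp [neg_add_eq_sub]

theorem lintegral_rpow_mul_exp_neg_mul_Ioi {a r : ℝ} (ha : 0 < a) (hr : 0 < r) :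
    ∫⁻ u in Ioi 0, ENNReal.ofReal (u ^ (a - 1) * exp (-(r * u))) =
      ENNReal.ofReal ((1 / r) ^ a * Gamma a) := by
  have hint : IntegrableOn (fun u : ℝ => u ^ (a - 1) * exp (-(r * u))) (Ioi 0) := by
    simpa using integrableOn_rpow_mul_exp_neg_mul_rpow (p := 1) (by linarith) zero_lt_one hr
  rw [← integral_rpow_mul_exp_neg_mul_Ioi ha hr, ofReal_integral_eq_lintegral_ofReal hint]
  filter_upwards [ae_restrict_mem measurableSet_Ioi] with u (hu : 0 < u)
  positivity

theorem ofReal_rpow_neg_eq_lintegral {q r : ℝ} (hq : 0 < q) (hr : 0 < r) :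
    ENNReal.ofReal (r ^ (-q)) =
      ∫⁻ u in Ioi 0, ENNReal.ofReal ((Gamma q)⁻¹ * u ^ (q - 1) * exp (-(u * r))) := by
  simp_rw [mul_assoc, ENNReal.ofReal_mul (inv_nonneg.2 (Gamma_pos_of_pos hq).le), mul_comm _ r]
  rw [lintegral_const_mul' _ _ ENNReal.ofReal_ne_top, lintegral_rpow_mul_exp_neg_mul_Ioi hq hr,
    ← ENNReal.ofReal_mul (inv_nonneg.2 (Gamma_pos_of_pos hq).le)]
  congr 1
  rw [one_div, inv_rpow hr.le, rpow_neg hr.le]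
  field_simp [(Gamma_pos_of_pos hq).ne']

theorem lintegral_rpow_mul_one_sub_exp_neg_mul {c : ℝ} (hc : 0 ≤ c) :
    ∫⁻ x in Ioi 0, ENNReal.ofReal (x ^ (-(3 / 2 : ℝ)) * (1 - exp (-(x * c)))) =
      ENNReal.ofReal (2 * √π * √c) := by
  -- `1 - e^{-xc} = x ∫₀ᶜ e^{-xs} ds`, then Tonelli and the Gamma integral in `x`
  have h_inner : ∀ x ∈ Ioi (0 : ℝ), ENNReal.ofReal (x ^ (-(3 / 2 : ℝ)) * (1 - exp (-(x * c)))) =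
      ∫⁻ s in Ioo 0 c, ENNReal.ofReal (x ^ ((1 / 2 : ℝ) - 1) * exp (-(s * x))) := by
    intro x (hx : 0 < x)
    rw [ENNReal.ofReal_mul (by positivity), ← lintegral_Ioo_mul_exp_neg_mul hx.le hc,
      ← lintegral_const_mul' _ _ ENNReal.ofReal_ne_top]
    refine setLIntegral_congr_fun measurableSet_Ioo fun s _ => ?_
    rw [← ENNReal.ofReal_mul (by positivity), ← mul_assoc, mul_comm s x]
    congr 2
    rw [← rpow_add_one hx.ne']
    norm_num
  have h_gamma : ∀ s ∈ Ioo (0 : ℝ) c,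
      ∫⁻ x in Ioi 0, ENNReal.ofReal (x ^ ((1 / 2 : ℝ) - 1) * exp (-(s * x))) =
        ENNReal.ofReal (√π * s ^ (-(1 / 2 : ℝ))) := by
    intro s hs
    rw [lintegral_rpow_mul_exp_neg_mul_Ioi one_half_pos hs.1, Gamma_one_half_eq, one_div s,
      inv_rpow hs.1.le, rpow_neg hs.1.le, mul_comm]
  have h_meas : Measurable (Function.uncurry fun x s : ℝ =>
      ENNReal.ofReal (x ^ ((1 / 2 : ℝ) - 1) * exp (-(s * x)))) := by
    unfold Function.uncurry; fun_prop
  rw [setLIntegral_congr_fun measurableSet_Ioi h_inner,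
    lintegral_lintegral_swap h_meas.aemeasurable,
    setLIntegral_congr_fun measurableSet_Ioo h_gamma, ← ofReal_integral_eq_lintegral_ofReal,
    ← integral_Ioc_eq_integral_Ioo, ← intervalIntegral.integral_of_le hc,
    intervalIntegral.integral_const_mul, integral_rpow (by norm_num), sqrt_eq_rpow c]
  · congr 1
    norm_num
    ring
  · exact ((intervalIntegral.intervalIntegrable_rpow' (by norm_num)).1.mono_set
      Ioo_subset_Ioc_self).const_mul _
  · filter_upwards [ae_restrict_mem measurableSet_Ioo] with s hs
    have := hs.1
    positivity

theorem lintegral_rpow_mul_one_sub_exp_neg_div {c : ℝ} (hc : 0 ≤ c) :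
    ∫⁻ u in Ioi 0, ENNReal.ofReal (u ^ (-(1 / 2 : ℝ)) * (1 - exp (-(c / u)))) =
      ENNReal.ofReal (2 * √π * √c) := by
  have h_image : (fun x : ℝ => x⁻¹) '' Set.Ioi 0 = Set.Ioi 0 := by
    rw [Set.image_inv_eq_inv]; ext x; simp
  rw [← h_image, lintegral_image_eq_lintegral_abs_deriv_mul measurableSet_Ioi
    (fun x hx => (hasDerivAt_inv (ne_of_gt hx)).hasDerivWithinAt) inv_injective.injOn,
    ← lintegral_rpow_mul_one_sub_exp_neg_mul hc]
  refine setLIntegral_congr_fun measurableSet_Ioi fun x (hx : 0 < x) => ?_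
  rw [← ENNReal.ofReal_mul (abs_nonneg _), ← mul_assoc, div_inv_eq_mul, mul_comm c x]
  congr 2
  rw [abs_neg, abs_of_pos (by positivity), inv_rpow hx.le, ← rpow_neg hx.le, ← rpow_two,
    ← rpow_neg hx.le, ← rpow_add hx]
  norm_num

theorem sq_norm_sum_ofReal_mul_exp_I_mul {ι : Type*} (s : Finset ι) (u θ : ι → ℝ) :
    ‖∑ i ∈ s, (u i : ℂ) * Complex.exp (Complex.I * θ i)‖ ^ 2 =
      ∑ i ∈ s, ∑ j ∈ s, u i * u j * cos (θ i - θ j) := by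
  rw [Complex.sq_norm, ← Complex.ofReal_re (Complex.normSq _), Complex.normSq_eq_conj_mul_self,
    map_sum, Finset.sum_mul_sum, Complex.re_sum]
  refine Finset.sum_congr rfl fun i _ => ?_
  rw [Complex.re_sum]
  refine Finset.sum_congr rfl fun j _ => ?_
  simp [Complex.mul_re, Complex.exp_re, Complex.exp_im, ← Complex.exp_conj, cos_sub]
  ring

theorem cConst_pos (d : ℕ) : 0 < cConst d := by
  unfold cConst
  positivity

section InnerProductSpace

variable {V : Type*} [NormedAddCommGroup V] [InnerProductSpace ℝ V] [FiniteDimensional ℝ V]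
  [MeasurableSpace V] [BorelSpace V]

theorem integrable_cos_inner_mul_exp_neg_mul_sq_norm {b : ℝ} (hb : 0 < b) (x : V) :
    Integrable fun t : V => cos ⟪x, t⟫ * exp (-(b * ‖t‖ ^ 2)) := by
  simpa [Complex.exp_re, ← Complex.ofReal_pow, mul_comm] using
    (GaussianFourier.integrable_cexp_neg_mul_sq_norm_add (b := b) hb Complex.I x).re

theorem integral_cos_inner_mul_exp_neg_mul_sq_norm {b : ℝ} (hb : 0 < b) (x : V) :
    ∫ t : V, cos ⟪x, t⟫ * exp (-(b * ‖t‖ ^ 2)) =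
      (π / b) ^ (Module.finrank ℝ V / 2 : ℝ) * exp (-(‖x‖ ^ 2 / (4 * b))) := by
  have h_rhs : ((π : ℂ) / b) ^ ((Module.finrank ℝ V : ℂ) / 2) *
      Complex.exp (Complex.I ^ 2 * ‖x‖ ^ 2 / (4 * b)) =
      ((π / b) ^ (Module.finrank ℝ V / 2 : ℝ) * exp (-(‖x‖ ^ 2 / (4 * b))) : ℝ) := by
    rw [Complex.ofReal_mul, Complex.ofReal_cpow (by positivity), Complex.ofReal_exp, Complex.I_sq]
    push_cast
    ring_nf
  have h := congrArg Complex.re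
    (GaussianFourier.integral_cexp_neg_mul_sq_norm_add (b := b) hb Complex.I x)
  rw [h_rhs, Complex.ofReal_re, ← RCLike.re_to_complex, ← integral_re
    (GaussianFourier.integrable_cexp_neg_mul_sq_norm_add (b := b) hb Complex.I x)] at h
  simpa [Complex.exp_re, ← Complex.ofReal_pow, mul_comm] using h

theorem lintegral_one_sub_cos_inner_mul_exp_neg_mul_sq_norm {b : ℝ} (hb : 0 < b) (x : V) :
    ∫⁻ t : V, ENNReal.ofReal ((1 - cos ⟪x, t⟫) * exp (-(b * ‖t‖ ^ 2))) =
      ENNReal.ofReal ((π / b) ^ (Module.finrank ℝ V / 2 : ℝ) *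
        (1 - exp (-(‖x‖ ^ 2 / (4 * b))))) := by
  have h_int₀ := integrable_cos_inner_mul_exp_neg_mul_sq_norm hb (0 : V)
  have h_gauss₀ := integral_cos_inner_mul_exp_neg_mul_sq_norm hb (0 : V)
  simp only [inner_zero_left, cos_zero, one_mul, norm_zero] at h_int₀ h_gauss₀
  have h_int := integrable_cos_inner_mul_exp_neg_mul_sq_norm hb x
  rw [← ofReal_integral_eq_lintegral_ofReal
    ((h_int₀.sub h_int).congr (.of_forall fun t => (one_sub_mul _ _).symm))]
  · simp only [one_sub_mul]
    rw [integral_sub h_int₀ h_int, h_gauss₀, integral_cos_inner_mul_exp_neg_mul_sq_norm hb x]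
    simp [mul_sub]
  · exact .of_forall fun t => mul_nonneg (sub_nonneg.2 (cos_le_one _)) (exp_pos _).le

theorem lintegral_one_sub_cos_inner_div_norm_pow_eq_lintegral_Ioi [Nontrivial V] (x : V) :
    ∫⁻ t : V, ENNReal.ofReal ((1 - cos ⟪x, t⟫) / ‖t‖ ^ (1 + Module.finrank ℝ V)) =
      ENNReal.ofReal ((Gamma ((1 + Module.finrank ℝ V) / 2))⁻¹ *
          π ^ (Module.finrank ℝ V / 2 : ℝ)) *
        ∫⁻ u in Ioi 0, ENNReal.ofReal (u ^ (-(1 / 2 : ℝ)) * (1 - exp (-(‖x‖ ^ 2 / 4 / u)))) := by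
  set d := Module.finrank ℝ V
  set q : ℝ := (1 + d) / 2 with hq_def
  have hq : 0 < q := by positivity
  have h_subord : ∀ t : V, t ≠ 0 →
      ENNReal.ofReal ((1 - cos ⟪x, t⟫) / ‖t‖ ^ (1 + d)) =
        ∫⁻ u in Ioi 0, ENNReal.ofReal ((Gamma q)⁻¹ * u ^ (q - 1)) *
          ENNReal.ofReal ((1 - cos ⟪x, t⟫) * exp (-(u * ‖t‖ ^ 2))) := by
    intro t ht
    have h_cos : 0 ≤ 1 - cos ⟪x, t⟫ := sub_nonneg.2 (cos_le_one _)
    have h_pow : ‖t‖ ^ (1 + d) = (‖t‖ ^ 2) ^ q := by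
      rw [← rpow_natCast ‖t‖ 2, ← rpow_mul (norm_nonneg _), ← rpow_natCast]
      congr 1
      rw [hq_def]
      push_cast
      ring
    rw [div_eq_mul_inv, h_pow, ← rpow_neg (by positivity), ENNReal.ofReal_mul h_cos,
      ofReal_rpow_neg_eq_lintegral hq (by positivity),
      ← lintegral_const_mul' _ _ ENNReal.ofReal_ne_top]
    refine setLIntegral_congr_fun measurableSet_Ioi fun u (hu : 0 < u) => ?_
    rw [← ENNReal.ofReal_mul h_cos, ← ENNReal.ofReal_mul (by positivity)]
    congr 1
    ring
  have h_gauss : ∀ u ∈ Ioi (0 : ℝ),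
      ∫⁻ t : V, ENNReal.ofReal ((Gamma q)⁻¹ * u ^ (q - 1)) *
          ENNReal.ofReal ((1 - cos ⟪x, t⟫) * exp (-(u * ‖t‖ ^ 2))) =
        ENNReal.ofReal ((Gamma q)⁻¹ * π ^ (d / 2 : ℝ)) *
          ENNReal.ofReal (u ^ (-(1 / 2 : ℝ)) * (1 - exp (-(‖x‖ ^ 2 / 4 / u)))) := by
    intro u (hu : 0 < u)
    rw [lintegral_const_mul' _ _ ENNReal.ofReal_ne_top,
      lintegral_one_sub_cos_inner_mul_exp_neg_mul_sq_norm hu, show Module.finrank ℝ V = d from rfl,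
      ← ENNReal.ofReal_mul (by positivity), ← ENNReal.ofReal_mul (by positivity)]
    congr 1
    rw [div_rpow pi_pos.le hu.le, div_div, mul_comm 4 u]
    have : u ^ (q - 1) = u ^ (-(1 / 2 : ℝ)) * u ^ (d / 2 : ℝ) := by
      rw [← rpow_add hu, hq_def]; ring_nf
    rw [this]
    field_simp
  have h_meas : Measurable (Function.uncurry fun (t : V) (u : ℝ) =>
      ENNReal.ofReal ((Gamma q)⁻¹ * u ^ (q - 1)) *
        ENNReal.ofReal ((1 - cos ⟪x, t⟫) * exp (-(u * ‖t‖ ^ 2)))) := by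
    unfold Function.uncurry; fun_prop
  rw [lintegral_congr_ae ((Measure.ae_ne volume 0).mono h_subord),
    lintegral_lintegral_swap h_meas.aemeasurable, setLIntegral_congr_fun measurableSet_Ioi h_gauss,
    lintegral_const_mul' _ _ ENNReal.ofReal_ne_top]

theorem lintegral_one_sub_cos_inner_div_norm_pow (x : V) :
    ∫⁻ t : V, ENNReal.ofReal ((1 - cos ⟪x, t⟫) / ‖t‖ ^ (1 + Module.finrank ℝ V)) =
      ENNReal.ofReal (cConst (Module.finrank ℝ V) * ‖x‖) := by
  rcases eq_or_ne x 0 with rfl | hx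
  · simp
  have : Nontrivial V := ⟨⟨x, 0, hx⟩⟩
  rw [lintegral_one_sub_cos_inner_div_norm_pow_eq_lintegral_Ioi,
    lintegral_rpow_mul_one_sub_exp_neg_div (by positivity), ← ENNReal.ofReal_mul (by positivity)]
  congr 1
  rw [show ‖x‖ ^ 2 / 4 = (‖x‖ / 2) ^ 2 by ring, sqrt_sq (by positivity), sqrt_eq_rpow, cConst,
    show (1 + Module.finrank ℝ V : ℝ) / 2 = Module.finrank ℝ V / 2 + 1 / 2 by ring,
    rpow_add pi_pos]
  field_simp

theorem integrable_one_sub_cos_inner_div_norm_pow (x : V) :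
    Integrable fun t : V => (1 - cos ⟪x, t⟫) / ‖t‖ ^ (1 + Module.finrank ℝ V) := by
  refine ⟨(by fun_prop : Measurable _).aestronglyMeasurable, ?_⟩
  rw [hasFiniteIntegral_iff_ofReal, lintegral_one_sub_cos_inner_div_norm_pow]
  · exact ENNReal.ofReal_lt_top
  · exact .of_forall fun t => div_nonneg (sub_nonneg.2 (cos_le_one _)) (by positivity)

theorem integral_one_sub_cos_inner_div_norm_pow (x : V) :
    ∫ t : V, (1 - cos ⟪x, t⟫) / ‖t‖ ^ (1 + Module.finrank ℝ V) =
      cConst (Module.finrank ℝ V) * ‖x‖ := by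
  have h_nonneg : 0 ≤ᵐ[volume] fun t : V => (1 - cos ⟪x, t⟫) / ‖t‖ ^ (1 + Module.finrank ℝ V) :=
    .of_forall fun t => div_nonneg (sub_nonneg.2 (cos_le_one _)) (by positivity)
  rw [integral_eq_lintegral_of_nonneg_ae h_nonneg
      (integrable_one_sub_cos_inner_div_norm_pow x).aestronglyMeasurable,
    lintegral_one_sub_cos_inner_div_norm_pow, ENNReal.toReal_ofReal]
  exact mul_nonneg (cConst_pos _).le (norm_nonneg x)

theorem integral_sq_norm_sum_mul_exp_inner_div_norm_pow {ι : Type*} [Fintype ι] (u : ι → ℝ)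
    (hu : ∑ i, u i = 0) (x : ι → V) :
    ∫ t : V, ‖∑ i, (u i : ℂ) * Complex.exp (Complex.I * ⟪t, x i⟫)‖ ^ 2 /
        ‖t‖ ^ (1 + Module.finrank ℝ V) =
      -(cConst (Module.finrank ℝ V) * ∑ i, ∑ j, u i * u j * ‖x i - x j‖) := by
  set k := 1 + Module.finrank ℝ V
  have h_mass : ∑ i, ∑ j, u i * u j = 0 := by rw [← Finset.sum_mul_sum, hu, zero_mul]
  have h_pt : ∀ t : V, ‖∑ i, (u i : ℂ) * Complex.exp (Complex.I * ⟪t, x i⟫)‖ ^ 2 / ‖t‖ ^ k =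
      ∑ i, ∑ j, -(u i * u j) * ((1 - cos ⟪x i - x j, t⟫) / ‖t‖ ^ k) := by
    intro t
    have h_term : ∀ i j, -(u i * u j) * ((1 - cos ⟪x i - x j, t⟫) / ‖t‖ ^ k) =
        u i * u j * cos ⟪x i - x j, t⟫ / ‖t‖ ^ k - u i * u j / ‖t‖ ^ k := fun i j => by ring
    simp only [sq_norm_sum_ofReal_mul_exp_I_mul, real_inner_comm _ t, ← inner_sub_left, h_term,
      Finset.sum_sub_distrib, ← Finset.sum_div, h_mass, zero_div, sub_zero]
  have h_int : ∀ i j, Integrable fun t : V => -(u i * u j) * ((1 - cos ⟪x i - x j, t⟫) / ‖t‖ ^ k) :=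
    fun i j => (integrable_one_sub_cos_inner_div_norm_pow _).const_mul _
  simp_rw [h_pt]
  rw [integral_finsetSum _ fun i _ => integrable_finsetSum _ fun j _ => h_int i j,
    Finset.mul_sum, ← Finset.sum_neg_distrib]
  refine Finset.sum_congr rfl fun i _ => ?_
  rw [integral_finsetSum _ fun j _ => h_int i j, Finset.mul_sum, ← Finset.sum_neg_distrib]
  refine Finset.sum_congr rfl fun j _ => ?_
  rw [integral_const_mul, integral_one_sub_cos_inner_div_norm_pow]
  ring

end InnerProductSpace

theorem phiXw_sub {p : ℕ} (n : ℕ) (X : Fin n → Evec p) (v w : Fin n → ℝ) (t : Evec p) :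
    phiXw n X v t - phiXw n X w t = phiXw n X (v - w) t := by
  simp only [phiXw, ← mul_sub, ← Finset.sum_sub_distrib]
  congr 1
  refine Finset.sum_congr rfl fun i _ => ?_
  rw [Pi.sub_apply, Complex.ofReal_sub, sub_mul]

theorem energyX_eq_neg_sum {p : ℕ} (n : ℕ) (X : Fin n → Evec p) (w : Fin n → ℝ) :
    energyX n X w = -(1 / (n : ℝ) ^ 2 * ∑ i, ∑ j, (1 - w i) * (1 - w j) * ‖X i - X j‖) := by
  have h_symm : ∑ i, ∑ j, w j * ‖X i - X j‖ = ∑ i, ∑ j, w i * ‖X i - X j‖ := by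
    rw [Finset.sum_comm]
    exact Finset.sum_congr rfl fun i _ => Finset.sum_congr rfl fun j _ => by rw [norm_sub_rev]
  have h_expand : ∑ i, ∑ j, (1 - w i) * (1 - w j) * ‖X i - X j‖ =
      ∑ i, ∑ j, ‖X i - X j‖ - ∑ i, ∑ j, w i * ‖X i - X j‖ - ∑ i, ∑ j, w j * ‖X i - X j‖ +
        ∑ i, ∑ j, w i * w j * ‖X i - X j‖ := by
    simp only [← Finset.sum_sub_distrib, ← Finset.sum_add_distrib]
    refine Finset.sum_congr rfl fun i _ => Finset.sum_congr rfl fun j _ => ?_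
    ring
  rw [energyX, h_expand, h_symm]
  ring

theorem weighted_energy_distance_duality_general {p : ℕ} (n : ℕ)
    (X : Fin n → Evec p) (w : Fin n → ℝ)
    (hw_sum : ∑ i, w i = (n : ℝ)) :
    energyX n X w =
      ∫ t : Evec p,
        ‖phiXw n X (fun _ => 1) t - phiXw n X w t‖ ^ 2
          / (cConst p * ‖t‖ ^ (1 + p)) := by
  simp_rw [phiXw_sub]
  set u : Fin n → ℝ := (fun _ => 1) - w
  have hu : ∑ i, u i = 0 := by simp [u, Finset.sum_sub_distrib, hw_sum]
  have h_duality := integral_sq_norm_sum_mul_exp_inner_div_norm_pow u hu X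
  rw [finrank_euclideanSpace_fin] at h_duality
  have h_integrand : ∀ t : Evec p, ‖phiXw n X u t‖ ^ 2 / (cConst p * ‖t‖ ^ (1 + p)) =
      1 / ((n : ℝ) ^ 2 * cConst p) *
        (‖∑ i, (u i : ℂ) * Complex.exp (Complex.I * ⟪t, X i⟫)‖ ^ 2 / ‖t‖ ^ (1 + p)) := by
    intro t
    rw [phiXw, norm_mul, mul_pow, norm_div, norm_one, Complex.norm_natCast]
    ring
  rw [integral_congr_ae (.of_forall h_integrand), integral_const_mul, h_duality,
    energyX_eq_neg_sum]
  have := (cConst_pos p).ne'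
  field_simp
  rfl

/-- (Proposition 1 of Huling and Mak, applied here): the weighted energy distance
between the weighted and unweighted empirical distributions of the `Xᵢ` equals the
stated integral of the weighted empirical characteristic functions. -/
theorem weighted_energy_distance_duality {p : ℕ} (n : ℕ) (hn : 1 ≤ n)
    (X : Fin n → Evec p) (w : Fin n → ℝ)
    (hw_nonneg : ∀ i, 0 ≤ w i) (hw_sum : ∑ i, w i = (n : ℝ)) :
    energyX n X w =
      ∫ t : Evec p,
        ‖phiXw n X (fun _ => 1) t - phiXw n X w t‖ ^ 2
          / (cConst p * ‖t‖ ^ (1 + p)) :=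
  weighted_energy_distance_duality_general n X w hw_sum
end

section
/- Let g : ℝ^p → ℝ and h : ℝ → ℝ be measurable functions with E|g(X)| < ∞ and E|h(A)| < ∞. Then E[g(X) h(A) W] = E[g(X)] · E[h(A)], where W is the stabilized generalized propensity score weight. In particular, weighting by W renders X and A independent in the weighted population. -/
/-! Wherever `f > 0`, the weighted density `W · f` equals the product `f_A(a) f_X(x)` of the
marginals, so the weighted integral factors by Fubini into `∫ g f_X dμ · ∫ h f_A dν`; by Fubini
again, each factor is the expectation of `g(X)`, resp. `h(A)`, under the joint density `f`. -/

open MeasureTheory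
open scoped BigOperators ENNReal

noncomputable section

/-- Marginal density of `X`: f_X(x) = ∫ f(x,a) dν(a). -/
def margX {p : ℕ} (ν : Measure ℝ) (f : Evec p × ℝ → ℝ) (x : Evec p) : ℝ :=
  ∫ a, f (x, a) ∂ν

/-- Marginal density of `A`: f_A(a) = ∫ f(x,a) dμ(x). -/
def margA {p : ℕ} (μ : Measure (Evec p)) (f : Evec p × ℝ → ℝ) (a : ℝ) : ℝ :=
  ∫ x, f (x, a) ∂μ

/-- The stabilized generalized propensity score weight
W(x,a) = f_A(a)·f_X(x) / f_{X,A}(x,a). -/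
def gpsWeight {p : ℕ} (μ : Measure (Evec p)) (ν : Measure ℝ)
    (f : Evec p × ℝ → ℝ) (z : Evec p × ℝ) : ℝ :=
  margA μ f z.2 * margX ν f z.1 / f z

section Fubini

variable {α β 𝕜 : Type*} [RCLike 𝕜] [MeasurableSpace α] [MeasurableSpace β]
  {μ : Measure α} {ν : Measure β} [SFinite μ] [SFinite ν]

theorem integral_prod_fst_mul {g : α → 𝕜} {F : α × β → 𝕜}
    (hint : Integrable (fun z => g z.1 * F z) (μ.prod ν)) :
    ∫ z, g z.1 * F z ∂(μ.prod ν) = ∫ x, g x * ∫ y, F (x, y) ∂ν ∂μ := by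
  simp only [integral_prod _ hint, integral_const_mul]

theorem integral_prod_snd_mul {h : β → 𝕜} {F : α × β → 𝕜}
    (hint : Integrable (fun z => h z.2 * F z) (μ.prod ν)) :
    ∫ z, h z.2 * F z ∂(μ.prod ν) = ∫ y, h y * ∫ x, F (x, y) ∂μ ∂ν := by
  simp only [integral_prod_symm _ hint, integral_const_mul]

end Fubini

theorem gpsWeight_mul_self {p : ℕ} (μ : Measure (Evec p)) (ν : Measure ℝ)
    {f : Evec p × ℝ → ℝ} {z : Evec p × ℝ} (hz : f z ≠ 0) :
    gpsWeight μ ν f z * f z = margX ν f z.1 * margA μ f z.2 := by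
  rw [gpsWeight, div_mul_cancel₀ _ hz, mul_comm]

theorem gps_weight_renders_independent_general {p : ℕ}
    (μ : Measure (Evec p)) (ν : Measure ℝ) [SigmaFinite μ] [SigmaFinite ν]
    (f : Evec p × ℝ → ℝ)
    (hf_pos : ∀ᵐ z ∂(μ.prod ν), 0 < f z)
    (g : Evec p → ℝ) (h : ℝ → ℝ)
    (hg_int : Integrable (fun z : Evec p × ℝ => g z.1 * f z) (μ.prod ν))
    (hh_int : Integrable (fun z : Evec p × ℝ => h z.2 * f z) (μ.prod ν)) :
    (∫ z : Evec p × ℝ, g z.1 * h z.2 * gpsWeight μ ν f z * f z ∂(μ.prod ν))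
      = (∫ z : Evec p × ℝ, g z.1 * f z ∂(μ.prod ν))
          * (∫ z : Evec p × ℝ, h z.2 * f z ∂(μ.prod ν)) := by
  have weighted_eq_product :
      (fun z : Evec p × ℝ => g z.1 * h z.2 * gpsWeight μ ν f z * f z)
        =ᵐ[μ.prod ν] fun z => (g z.1 * margX ν f z.1) * (h z.2 * margA μ f z.2) := by
    filter_upwards [hf_pos] with z hz
    rw [mul_assoc, gpsWeight_mul_self μ ν hz.ne']
    ring
  rw [integral_congr_ae weighted_eq_product,
    integral_prod_mul (fun x => g x * margX ν f x) (fun a => h a * margA μ f a),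
    integral_prod_fst_mul hg_int, integral_prod_snd_mul hh_int]
  rfl

/-- Weighting by the stabilized GPS weight `W` renders `X` and `A` independent:
for integrable `g(X)` and `h(A)`, `E[g(X)h(A)W] = E[g(X)]·E[h(A)]`. Here the joint
law of `(X,A)` has density `f`, strictly positive a.e., with respect to a product
`μ ⊗ ν` of σ-finite measures. -/
theorem gps_weight_renders_independent {p : ℕ}
    (μ : Measure (Evec p)) (ν : Measure ℝ) [SigmaFinite μ] [SigmaFinite ν]
    (f : Evec p × ℝ → ℝ) (hf_meas : Measurable f)
    (hf_nonneg : ∀ z, 0 ≤ f z)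
    (hf_pos : ∀ᵐ z ∂(μ.prod ν), 0 < f z)
    (hf_prob : ∫ z, f z ∂(μ.prod ν) = 1)
    (g : Evec p → ℝ) (h : ℝ → ℝ) (hg : Measurable g) (hh : Measurable h)
    (hg_int : Integrable (fun z : Evec p × ℝ => g z.1 * f z) (μ.prod ν))
    (hh_int : Integrable (fun z : Evec p × ℝ => h z.2 * f z) (μ.prod ν)) :
    (∫ z : Evec p × ℝ, g z.1 * h z.2 * gpsWeight μ ν f z * f z ∂(μ.prod ν))
      = (∫ z : Evec p × ℝ, g z.1 * f z ∂(μ.prod ν))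
          * (∫ z : Evec p × ℝ, h z.2 * f z ∂(μ.prod ν)) :=
  gps_weight_renders_independent_general μ ν f hf_pos g h hg_int hh_int
end
end

section
/- Let n ≥ 1, let X_1,…,X_n ∈ ℝ^p and A_1,…,A_n ∈ ℝ, and let λ ≥ 0. Let Q_X = (‖X_k − X_ℓ‖_2)_{k,ℓ} and Q_A = (|A_k − A_ℓ|)_{k,ℓ} be the Euclidean distance matrices, let C = (C_{kℓ}) and D = (D_{kℓ}) be the doubly-centered distance matrices, let C∘D denote the elementwise product, and set P = (1/n²)(C∘D) − (1/n²)Q_A − (1/n²)Q_X + (λ/n²)I_n and q = (2/n²)(Q_A + Q_X)𝟏. Then for every w ∈ ℝ^n: D(w) + (λ/n²)∑_{i=1}^n w_i² = wᵀ P w + qᵀ w − (1/n²)𝟏ᵀ(Q_A + Q_X)𝟏. In particular V²_{n,w}(X,A) = (1/n²) wᵀ (C∘D) w, and E(F^n_{A,w}, F^n_A) = −(1/n²)wᵀQ_A w + (2/n²)𝟏ᵀQ_A w − (1/n²)𝟏ᵀQ_A𝟏, and analogously for X. -/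
open MeasureTheory Finset Filter
open scoped BigOperators RealInnerProductSpace ENNReal

/-! Each summand of `D(w)` is a polynomial of degree at most two in `w`. Since the distance
matrices `Q` are symmetric, the linear parts `∑ᵢⱼ wᵢ Qᵢⱼ` of the energy distances are the
column-sum terms `𝟏ᵀ Q w`, and by linearity of `M ↦ wᵀ M w` the quadratic parts together with
the ridge penalty `λ wᵀ w` assemble into `wᵀ P w`. -/

open Matrix

section SymmetricKernel

variable {ι R : Type*} [Fintype ι] [CommRing R]

theorem sum_sum_mul_mul_eq_dotProduct_mulVec (M : ι → ι → R) (v w : ι → R) :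
    ∑ k, ∑ l, v k * M k l * w l = v ⬝ᵥ (of M *ᵥ w) := by
  simp only [dotProduct, mulVec, of_apply, mul_sum, mul_assoc]

theorem sum_rowSum_mul_eq_of_symm {Q : ι → ι → R} (hQ : ∀ i j, Q i j = Q j i) (w : ι → R) :
    ∑ i, (∑ j, Q i j) * w i = ∑ k, ∑ l, Q k l * w l := by
  rw [sum_comm]
  simp only [sum_mul, hQ]

theorem weighted_energy_eq_of_symm {Q : ι → ι → R} (hQ : ∀ i j, Q i j = Q j i) (c : R)
    (w : ι → R) :
    2 * c * ∑ i, ∑ j, w i * Q i j - c * ∑ i, ∑ j, w i * w j * Q i j - c * ∑ i, ∑ j, Q i j =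
      -c * ∑ k, ∑ l, w k * Q k l * w l + 2 * c * ∑ k, ∑ l, Q k l * w l
        - c * ∑ k, ∑ l, Q k l := by
  have hlin : ∑ i, ∑ j, w i * Q i j = ∑ k, ∑ l, Q k l * w l := by
    simp only [← sum_rowSum_mul_eq_of_symm hQ, sum_mul, mul_comm (w _)]
  have hquad : ∑ i, ∑ j, w i * w j * Q i j = ∑ k, ∑ l, w k * Q k l * w l := by
    simp only [mul_right_comm _ (w _)]
  rw [hlin, hquad]
  ring

end SymmetricKernel

theorem Vnw_eq_quadForm {p : ℕ} (n : ℕ) (X : Fin n → Evec p) (A : Fin n → ℝ) (w : Fin n → ℝ) :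
    Vnw n X A w = (1 / (n : ℝ) ^ 2) * ∑ k, ∑ l, w k * (Cmat n X k l * Dmat n A k l) * w l := by
  simp only [Vnw, mul_right_comm _ (w _), mul_assoc]

theorem energyA_eq_quadForm (n : ℕ) (A : Fin n → ℝ) {QA : Fin n → Fin n → ℝ}
    (hQA : ∀ k l, QA k l = |A k - A l|) (w : Fin n → ℝ) :
    energyA n A w =
      -(1 / (n : ℝ) ^ 2) * (∑ k, ∑ l, w k * QA k l * w l)
        + (2 / (n : ℝ) ^ 2) * (∑ k, ∑ l, QA k l * w l)
        - (1 / (n : ℝ) ^ 2) * ∑ k, ∑ l, QA k l := by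
  have hsymm : ∀ k l, QA k l = QA l k := fun k l => by rw [hQA, hQA, abs_sub_comm]
  simp only [energyA, ← hQA]
  linear_combination weighted_energy_eq_of_symm hsymm (1 / (n : ℝ) ^ 2) w

theorem energyX_eq_quadForm {p : ℕ} (n : ℕ) (X : Fin n → Evec p) {QX : Fin n → Fin n → ℝ}
    (hQX : ∀ k l, QX k l = ‖X k - X l‖) (w : Fin n → ℝ) :
    energyX n X w =
      -(1 / (n : ℝ) ^ 2) * (∑ k, ∑ l, w k * QX k l * w l)
        + (2 / (n : ℝ) ^ 2) * (∑ k, ∑ l, QX k l * w l)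
        - (1 / (n : ℝ) ^ 2) * ∑ k, ∑ l, QX k l := by
  have hsymm : ∀ k l, QX k l = QX l k := fun k l => by rw [hQX, hQX, norm_sub_rev]
  simp only [energyX, ← hQX]
  linear_combination weighted_energy_eq_of_symm hsymm (1 / (n : ℝ) ^ 2) w

theorem dependence_criterion_quadratic_program_general {p : ℕ} (n : ℕ)
    (X : Fin n → Evec p) (A : Fin n → ℝ) (lam : ℝ)
    (QX : Fin n → Fin n → ℝ) (hQX : ∀ k l, QX k l = ‖X k - X l‖)
    (QA : Fin n → Fin n → ℝ) (hQA : ∀ k l, QA k l = |A k - A l|)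
    (P : Fin n → Fin n → ℝ)
    (hP : ∀ k l, P k l =
      (1 / (n : ℝ) ^ 2) * (Cmat n X k l * Dmat n A k l)
        - (1 / (n : ℝ) ^ 2) * QA k l - (1 / (n : ℝ) ^ 2) * QX k l
        + (lam / (n : ℝ) ^ 2) * (if k = l then 1 else 0))
    (q : Fin n → ℝ)
    (hq : ∀ i, q i = (2 / (n : ℝ) ^ 2) * ∑ j, (QA i j + QX i j)) :
    (∀ w : Fin n → ℝ,
      Dcrit n X A w + (lam / (n : ℝ) ^ 2) * ∑ i, (w i) ^ 2 =
        (∑ k, ∑ l, w k * P k l * w l) + (∑ i, q i * w i)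
          - (1 / (n : ℝ) ^ 2) * ∑ i, ∑ j, (QA i j + QX i j))
    ∧ (∀ w : Fin n → ℝ,
        Vnw n X A w = (1 / (n : ℝ) ^ 2) * ∑ k, ∑ l, w k * (Cmat n X k l * Dmat n A k l) * w l)
    ∧ (∀ w : Fin n → ℝ,
        energyA n A w =
          -(1 / (n : ℝ) ^ 2) * (∑ k, ∑ l, w k * QA k l * w l)
            + (2 / (n : ℝ) ^ 2) * (∑ k, ∑ l, QA k l * w l)
            - (1 / (n : ℝ) ^ 2) * ∑ k, ∑ l, QA k l)
    ∧ (∀ w : Fin n → ℝ,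
        energyX n X w =
          -(1 / (n : ℝ) ^ 2) * (∑ k, ∑ l, w k * QX k l * w l)
            + (2 / (n : ℝ) ^ 2) * (∑ k, ∑ l, QX k l * w l)
            - (1 / (n : ℝ) ^ 2) * ∑ k, ∑ l, QX k l) := by
  refine ⟨fun w => ?_, Vnw_eq_quadForm n X A, energyA_eq_quadForm n A hQA,
    energyX_eq_quadForm n X hQX⟩
  have hPmat : of P = (1 / (n : ℝ) ^ 2) • of (fun k l => Cmat n X k l * Dmat n A k l)
      - (1 / (n : ℝ) ^ 2) • of QA - (1 / (n : ℝ) ^ 2) • of QX + (lam / (n : ℝ) ^ 2) • 1 := by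
    ext k l
    simp [hP, one_apply]
  have hQsymm : ∀ i j, QA i j + QX i j = QA j i + QX j i := fun i j => by
    rw [hQA, hQA, hQX, hQX, abs_sub_comm, norm_sub_rev]
  have hlin : ∑ i, q i * w i =
      2 / (n : ℝ) ^ 2 * (∑ k, ∑ l, QA k l * w l + ∑ k, ∑ l, QX k l * w l) := by
    simp only [hq, mul_assoc]
    rw [← mul_sum, sum_rowSum_mul_eq_of_symm hQsymm]
    simp only [add_mul, sum_add_distrib]
  have hnorm : ∑ i, w i ^ 2 = w ⬝ᵥ w := by simp only [dotProduct, sq]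
  rw [Dcrit, Vnw_eq_quadForm, energyA_eq_quadForm n A hQA, energyX_eq_quadForm n X hQX, hlin,
    hnorm]
  simp only [sum_add_distrib, sum_sum_mul_mul_eq_dotProduct_mulVec, hPmat, add_mulVec, sub_mulVec,
    smul_mulVec, one_mulVec, dotProduct_add, dotProduct_sub, dotProduct_smul, smul_eq_mul]
  ring

/-- Quadratic-program representation of the (penalized) dependence criterion:
with `P = (1/n²)(C∘D) − (1/n²)Q_A − (1/n²)Q_X + (λ/n²)Iₙ` and
`q = (2/n²)(Q_A + Q_X)𝟏`, one has
`D(w) + (λ/n²)∑ wᵢ² = wᵀPw + qᵀw − (1/n²)𝟏ᵀ(Q_A + Q_X)𝟏`, and the weighted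
distance covariance and weighted energy distances are the stated quadratic
forms in `w`. -/
theorem dependence_criterion_quadratic_program {p : ℕ} (n : ℕ) (hn : 1 ≤ n)
    (X : Fin n → Evec p) (A : Fin n → ℝ) (lam : ℝ) (hlam : 0 ≤ lam)
    (QX : Fin n → Fin n → ℝ) (hQX : ∀ k l, QX k l = ‖X k - X l‖)
    (QA : Fin n → Fin n → ℝ) (hQA : ∀ k l, QA k l = |A k - A l|)
    (P : Fin n → Fin n → ℝ)
    (hP : ∀ k l, P k l =
      (1 / (n : ℝ) ^ 2) * (Cmat n X k l * Dmat n A k l)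
        - (1 / (n : ℝ) ^ 2) * QA k l - (1 / (n : ℝ) ^ 2) * QX k l
        + (lam / (n : ℝ) ^ 2) * (if k = l then 1 else 0))
    (q : Fin n → ℝ)
    (hq : ∀ i, q i = (2 / (n : ℝ) ^ 2) * ∑ j, (QA i j + QX i j)) :
    (∀ w : Fin n → ℝ,
      Dcrit n X A w + (lam / (n : ℝ) ^ 2) * ∑ i, (w i) ^ 2 =
        (∑ k, ∑ l, w k * P k l * w l) + (∑ i, q i * w i)
          - (1 / (n : ℝ) ^ 2) * ∑ i, ∑ j, (QA i j + QX i j))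
    ∧ (∀ w : Fin n → ℝ,
        Vnw n X A w = (1 / (n : ℝ) ^ 2) * ∑ k, ∑ l, w k * (Cmat n X k l * Dmat n A k l) * w l)
    ∧ (∀ w : Fin n → ℝ,
        energyA n A w =
          -(1 / (n : ℝ) ^ 2) * (∑ k, ∑ l, w k * QA k l * w l)
            + (2 / (n : ℝ) ^ 2) * (∑ k, ∑ l, QA k l * w l)
            - (1 / (n : ℝ) ^ 2) * ∑ k, ∑ l, QA k l)
    ∧ (∀ w : Fin n → ℝ,
        energyX n X w =
          -(1 / (n : ℝ) ^ 2) * (∑ k, ∑ l, w k * QX k l * w l)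
            + (2 / (n : ℝ) ^ 2) * (∑ k, ∑ l, QX k l * w l)
            - (1 / (n : ℝ) ^ 2) * ∑ k, ∑ l, QX k l) :=
  dependence_criterion_quadratic_program_general n X A lam QX hQX QA hQA P hP q hq
end
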